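/- For the single-qubit depolarizing channel Γ_θ(ρ) = θρ + (1−θ)I/2 with θ ∈ (0,1), the SLD Fisher information of the output state Γ_θ(|ψ⟩⟨ψ|) for any pure input |ψ⟩ equals 1/(1−θ²), and this is the maximum of g_θ[Γ_θ(ρ)] over all single-qubit density matrices ρ. -/

import Mathlib

open Matrix
open scoped ComplexOrder
noncomputable section

/-- The single-qubit depolarizing channel `Γ_θ(ρ) = θρ + (1-θ)I/2` (for trace-one `ρ`). -/
def depol (t : ℝ) (ρ : Matrix (Fin 2) (Fin 2) ℂ) : Matrix (Fin 2) (Fin 2) ℂ :=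
  (t : ℂ) • ρ + (((1 - t) / 2 : ℝ) : ℂ) • 1

/-!
Write `ρ = I/2 + D`. For trace-one `ρ`, `D` is traceless and Cayley–Hamilton gives
`D² = (1/4 - det ρ) I`. The output state is `θD + I/2` and its derivative is `D`, so tracing the
SLD equation `D = ½{θD + I/2, L}` against `I` and against `D` gives two linear equations in
`tr L` and `tr (LD)`; solving them, the Fisher information is
`tr (LD) = (1 - 4 det ρ) / (1 - θ² + 4θ² det ρ)`. This decreases in `det ρ ≥ 0`, and pure states
have `det ρ = 0`.
-/

lemma depol_eq_smul_sub_add (t : ℝ) (ρ : Matrix (Fin 2) (Fin 2) ℂ) :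
    depol t ρ = (t : ℂ) • (ρ - (1 / 2 : ℂ) • 1) + (1 / 2 : ℂ) • 1 := by
  rw [depol]
  push_cast
  module

lemma hasDerivAt_depol_apply (ρ : Matrix (Fin 2) (Fin 2) ℂ) (i j : Fin 2) (t : ℝ) :
    HasDerivAt (fun s => depol s ρ i j) ((ρ - (1 / 2 : ℂ) • 1) i j) t := by
  simp only [depol_eq_smul_sub_add, Matrix.add_apply, Matrix.smul_apply, smul_eq_mul]
  simpa using ((hasDerivAt_id t).ofReal_comp.mul_const ((ρ - (1 / 2 : ℂ) • 1) i j)).add_const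
    ((1 / 2 : ℂ) * (1 : Matrix (Fin 2) (Fin 2) ℂ) i j)

lemma trace_mul_mul_one_sub_eq_of_sld {K n : Type*} [Field K] [CharZero K] [Fintype n]
    [DecidableEq n] {θ k : K} {D L : Matrix n n K} (hD : D.trace = 0) (hD2 : D * D = k • 1)
    (hsld : D = (1 / 2 : K) • ((θ • D + (1 / 2 : K) • 1) * L + L * (θ • D + (1 / 2 : K) • 1))) :
    (L * D).trace * (1 - 4 * θ ^ 2 * k) = 2 * Fintype.card n * k := by
  have htrL : θ * (L * D).trace + (1 / 2) * L.trace = 0 := by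
    have h := congrArg trace hsld
    simp only [hD, Matrix.add_mul, Matrix.mul_add, Matrix.smul_mul, Matrix.mul_smul, Matrix.one_mul,
      Matrix.mul_one, trace_smul, trace_add, smul_eq_mul, trace_mul_comm D L] at h
    linear_combination -h
  have htrLD : θ * k * L.trace + (1 / 2) * (L * D).trace = k * Fintype.card n := by
    have h := congrArg (fun X => (X * D).trace) hsld
    simp only [hD2, Matrix.add_mul, Matrix.mul_add, Matrix.smul_mul, Matrix.mul_smul,
      Matrix.one_mul, Matrix.mul_one, trace_smul, trace_add, smul_eq_mul, trace_one,
      Matrix.mul_assoc, trace_mul_comm D (L * D)] at h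
    linear_combination -h
  linear_combination 2 * htrLD - 4 * θ * k * htrL

lemma sub_half_smul_one_mul_self {K : Type*} [Field K] [CharZero K] {ρ : Matrix (Fin 2) (Fin 2) K}
    (htr : ρ.trace = 1) :
    (ρ - (1 / 2 : K) • 1) * (ρ - (1 / 2 : K) • 1) = (1 / 4 - ρ.det) • 1 := by
  rw [trace_fin_two, ← eq_sub_iff_add_eq'] at htr
  ext i j
  fin_cases i <;> fin_cases j <;> simp [mul_apply, det_fin_two, htr] <;> ring

lemma trace_vecMulVec_star_of_sum_norm_sq {n : Type*} [Fintype n] {ψ : n → ℂ}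
    (hψ : ∑ i, ‖ψ i‖ ^ 2 = 1) : (vecMulVec ψ (star ψ)).trace = 1 := by
  simp only [trace_vecMulVec, dotProduct, Pi.star_apply, Complex.star_def, Complex.mul_conj,
    ← Complex.sq_norm]
  exact_mod_cast hψ

lemma trace_mul_deriv_depol {θ : ℝ} {ρ ρ' L : Matrix (Fin 2) (Fin 2) ℂ} (htr : ρ.trace = 1)
    (hderiv : ∀ i j, HasDerivAt (fun t => depol t ρ i j) (ρ' i j) θ)
    (hsld : ρ' = (1 / 2 : ℂ) • (depol θ ρ * L + L * depol θ ρ)) :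
    (L * ρ').trace * (1 - θ ^ 2 + 4 * θ ^ 2 * ρ.det) = 1 - 4 * ρ.det := by
  have hρ' : ρ' = ρ - (1 / 2 : ℂ) • 1 :=
    ext fun i j => (hderiv i j).unique (hasDerivAt_depol_apply ρ i j θ)
  have hD : (ρ - (1 / 2 : ℂ) • 1).trace = 0 := by
    simp [trace_sub, htr]
  subst hρ'
  rw [depol_eq_smul_sub_add] at hsld
  have key := trace_mul_mul_one_sub_eq_of_sld hD (sub_half_smul_one_mul_self htr) hsld
  simp only [Fintype.card_fin, Nat.cast_ofNat] at key
  linear_combination key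

lemma Complex.re_eq_div_of_mul_ofReal_eq {z : ℂ} {a c : ℝ} (hc : c ≠ 0) (h : z * c = a) :
    z.re = a / c := by
  rw [eq_div_iff hc, ← Complex.re_mul_ofReal, h, Complex.ofReal_re]

/-- For the depolarizing channel with `θ ∈ (0,1)`, the SLD Fisher information of the output family
for any pure input equals `1/(1-θ²)`, and this is the maximum over all input density matrices. -/
theorem depol_fisher_pure_optimal (θ : ℝ) (hθ : θ ∈ Set.Ioo (0 : ℝ) 1) :
    (∀ ψ : Fin 2 → ℂ, (∑ i, ‖ψ i‖ ^ 2 = 1) →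
      ∀ ρ' : Matrix (Fin 2) (Fin 2) ℂ,
        (∀ i j, HasDerivAt (fun t => depol t (vecMulVec ψ (star ψ)) i j) (ρ' i j) θ) →
        ∀ L : Matrix (Fin 2) (Fin 2) ℂ, L.IsHermitian →
          ρ' = (1 / 2 : ℂ) • (depol θ (vecMulVec ψ (star ψ)) * L + L * depol θ (vecMulVec ψ (star ψ))) →
          ((L * ρ').trace).re = 1 / (1 - θ ^ 2)) ∧
    (∀ ρ : Matrix (Fin 2) (Fin 2) ℂ, ρ.PosSemidef → ρ.trace = 1 →
      ∀ ρ' : Matrix (Fin 2) (Fin 2) ℂ,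
        (∀ i j, HasDerivAt (fun t => depol t ρ i j) (ρ' i j) θ) →
        ∀ L : Matrix (Fin 2) (Fin 2) ℂ, L.IsHermitian →
          ρ' = (1 / 2 : ℂ) • (depol θ ρ * L + L * depol θ ρ) →
          ((L * ρ').trace).re ≤ 1 / (1 - θ ^ 2)) := by
  have hθ2 : 0 < 1 - θ ^ 2 := by nlinarith [hθ.1, hθ.2]
  refine ⟨fun ψ hψ ρ' hderiv L _ hsld => ?_, fun ρ hρ htr ρ' hderiv L _ hsld => ?_⟩
  · have key := trace_mul_deriv_depol (trace_vecMulVec_star_of_sum_norm_sq hψ) hderiv hsld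
    rw [det_vecMulVec] at key
    exact Complex.re_eq_div_of_mul_ofReal_eq (a := 1) hθ2.ne' (by push_cast; linear_combination key)
  · obtain ⟨d, hd, hdet⟩ := RCLike.nonneg_iff_exists_ofReal.mp hρ.det_nonneg
    have key := trace_mul_deriv_depol htr hderiv hsld
    rw [← hdet] at key
    have hden : 0 < 1 - θ ^ 2 + 4 * θ ^ 2 * d := by positivity
    rw [Complex.re_eq_div_of_mul_ofReal_eq (a := 1 - 4 * d) hden.ne'
      (by push_cast; linear_combination key),
      div_le_div_iff₀ hden hθ2]
    nlinarith
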